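/- arXiv:2206.00928 — 2 statements merged into one kernel-verified Lean document; each statement's English description precedes it below -/
import Mathlib

section
/- Let α ∈ {+,−}, and let G be a sharp α-semiradial with root r (i.e., every neighbor of r is linear). Let H be the linear ground of G and suppose V(G)∖V(H) ≠ ∅. Then: (i) there is no simple (−α,−α)-diear relative to H; and (ii) the set of cut edges from H to its complement whose end in H has sign −α is nonempty, and for each such edge e, its end u in V(G)∖V(H) is absolute in G. -/
/-- A bidirected graph on vertex type `V`: each edge has two ends (`fst`, `snd`),
each carrying a sign (`true` = `+`, `false` = `-`). Loops are edges with `fst = snd`. -/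
structure BG (V : Type) where
  E : Type
  fst : E → V
  snd : E → V
  s1 : E → Bool
  s2 : E → Bool

namespace BG

variable {V : Type}

/-- A step is a traversal of an edge in one of the two directions. -/
abbrev Step (G : BG V) : Type := G.E × Bool

variable (G : BG V)

def src (st : G.Step) : V := if st.2 then G.fst st.1 else G.snd st.1
def tgt (st : G.Step) : V := if st.2 then G.snd st.1 else G.fst st.1
/-- sign of the edge at the source end of the step -/
def ssign (st : G.Step) : Bool := if st.2 then G.s1 st.1 else G.s2 st.1
/-- sign of the edge at the target end of the step -/
def tsign (st : G.Step) : Bool := if st.2 then G.s2 st.1 else G.s1 st.1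

/-- `p` is a ditrail from `x` to `y`: an edge-simple walk such that at each internal
vertex the sign of the entering edge-end and the sign of the leaving edge-end are opposite. -/
def IsDitrail (p : List G.Step) (x y : V) : Prop :=
  (p.map Prod.fst).Nodup ∧
  List.Chain' (fun a b => G.tgt a = G.src b ∧ G.tsign a = !G.ssign b) p ∧
  (∀ st, p.head? = some st → G.src st = x) ∧
  (∀ st, p.getLast? = some st → G.tgt st = y) ∧
  (p = [] → x = y)

/-- There is an `(α, β)`-ditrail from `x` to `y` using only edges from `Es` and avoiding
the vertex set `A`.  The trivial (empty) ditrail from `x` to `x` counts as an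
`(!β, β)`-ditrail for each `β`. -/
def ReachWA (Es : Set G.E) (A : Set V) (α β : Bool) (x y : V) : Prop :=
  ∃ p : List G.Step, G.IsDitrail p x y ∧ (∀ st ∈ p, st.1 ∈ Es) ∧
    x ∉ A ∧ (∀ st ∈ p, G.tgt st ∉ A) ∧
    (p.head?.map G.ssign).getD (!β) = α ∧ (p.getLast?.map G.tsign).getD β = β

/-- There is an `(α, β)`-ditrail from `x` to `y` using only edges from `Es`. -/
def ReachW (Es : Set G.E) (α β : Bool) (x y : V) : Prop := G.ReachWA Es ∅ α β x y

/-- There is an `(α, β)`-ditrail from `x` to `y` in `G`. -/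
def Reach (α β : Bool) (x y : V) : Prop := G.ReachW Set.univ α β x y

/-- There is an `α`-ditrail from `x` to `y` in `G` (only the starting sign is constrained). -/
def ReachS (α : Bool) (x y : V) : Prop := ∃ β, G.Reach α β x y

/-- There is an `α`-ditrail from `x` to `y` using only edges from `Es`. -/
def ReachWS (Es : Set G.E) (α : Bool) (x y : V) : Prop := ∃ β, G.ReachW Es α β x y

def Adj (u v : V) : Prop :=
  ∃ e : G.E, (G.fst e = u ∧ G.snd e = v) ∨ (G.fst e = v ∧ G.snd e = u)

/-- `G` is an `α`-radial with root `r`. -/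
def IsRadial (α : Bool) (r : V) : Prop := ∀ v, G.Reach α (!α) v r
/-- `G` is an `α`-semiradial with root `r`. -/
def IsSemiradial (α : Bool) (r : V) : Prop := ∀ v, G.ReachS α v r

/-- `x` is an (`α`-)strong vertex with respect to `r`. -/
def StrongVtx (α : Bool) (r x : V) : Prop :=
  G.Reach α (!α) x r ∧ G.Reach (!α) (!α) x r
/-- `x` is a sublinear vertex with respect to `r`. -/
def SublinearVtx (α : Bool) (r x : V) : Prop :=
  G.Reach α (!α) x r ∧ ¬ G.Reach (!α) (!α) x r
/-- `x` is an absolute vertex with respect to `r`. -/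
def AbsoluteVtx (r x : V) : Prop := ∀ α : Bool, G.ReachS α x r
/-- `x` is an `α`-linear vertex with respect to `r`. -/
def LinearVtx (α : Bool) (r x : V) : Prop := G.ReachS α x r ∧ ¬ G.ReachS (!α) x r

/-- sharpness at the root: every neighbor of `r` is linear. -/
def SharpAt (α : Bool) (r : V) : Prop := ∀ v, G.Adj v r → G.LinearVtx α r v

/-- `v` is joined to `r` by an edge whose end at `r` has sign `!α`. -/
def OppNbr (α : Bool) (r v : V) : Prop :=
  ∃ e : G.E, (G.fst e = r ∧ G.snd e = v ∧ G.s1 e = !α) ∨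
    (G.snd e = r ∧ G.fst e = v ∧ G.s2 e = !α)

/-- roundness: every vertex joined to `r` by an edge whose end at `r` has sign `!α` is strong. -/
def RoundAt (α : Bool) (r : V) : Prop := ∀ v, G.OppNbr α r v → G.StrongVtx α r v

/-- `e` is a cut edge of `S` whose end in `S` carries the sign `γ`. -/
def CutSign (S : Set V) (γ : Bool) (e : G.E) : Prop :=
  (G.fst e ∈ S ∧ G.snd e ∉ S ∧ G.s1 e = γ) ∨
  (G.snd e ∈ S ∧ G.fst e ∉ S ∧ G.s2 e = γ)

/-- edges of the subgraph of `G` induced by `S` -/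
def inducedEdges (S : Set V) : Set G.E := {e | G.fst e ∈ S ∧ G.snd e ∈ S}

/-- a simple diear relative to `S`: a nonempty ditrail whose first and last vertices
lie in `S` and whose internal vertices avoid `S`. -/
def IsSimpleDiear (S : Set V) (p : List G.Step) : Prop :=
  p ≠ [] ∧ ∃ u v, G.IsDitrail p u v ∧ u ∈ S ∧ v ∈ S ∧
    ∀ w ∈ p.dropLast.map G.tgt, w ∉ S

/-- a scoop diear relative to `S` with grip `e`: of the form `(y,e,x) + P` where `y ∈ S`,
`x ∉ S`, and `P` is a ditrail from `x` back to `y` ending with the reverse traversal of `e`,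
whose internal vertices avoid `S`. -/
def IsScoopDiear (S : Set V) (e : G.E) (p : List G.Step) : Prop :=
  ∃ d q, p = (e, d) :: q ∧ G.src (e, d) ∈ S ∧ G.tgt (e, d) ∉ S ∧
    G.IsDitrail q (G.tgt (e, d)) (G.src (e, d)) ∧
    q.getLast? = some (e, !d) ∧
    (∀ st, q.head? = some st → G.ssign st = !(G.tsign (e, d))) ∧
    ∀ w ∈ q.dropLast.map G.tgt, w ∉ S

/-- A subgraph of `G`. -/
structure Sub (G : BG V) where
  verts : Set V
  edges : Set G.E
  fst_mem : ∀ e ∈ edges, G.fst e ∈ verts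
  snd_mem : ∀ e ∈ edges, G.snd e ∈ verts

variable {G}

def Sub.le (K L : G.Sub) : Prop := K.verts ⊆ L.verts ∧ K.edges ⊆ L.edges

def Sub.union (K L : G.Sub) : G.Sub where
  verts := K.verts ∪ L.verts
  edges := K.edges ∪ L.edges
  fst_mem := fun e he => he.elim (fun h => Or.inl (K.fst_mem e h)) (fun h => Or.inr (L.fst_mem e h))
  snd_mem := fun e he => he.elim (fun h => Or.inl (K.snd_mem e h)) (fun h => Or.inr (L.snd_mem e h))

/-- the subgraph `K` is an `α`-semiradial with root `r`. -/
def Sub.IsSemiradial (K : G.Sub) (α : Bool) (r : V) : Prop :=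
  r ∈ K.verts ∧ ∀ v ∈ K.verts, G.ReachWS K.edges α v r

/-- the subgraph `K` is an absolute semiradial with root `r`. -/
def Sub.IsAbsolute (K : G.Sub) (r : V) : Prop := ∀ α : Bool, K.IsSemiradial α r

/-- the subgraph `K` is an `α`-radial with root `r`. -/
def Sub.IsRadial (K : G.Sub) (α : Bool) (r : V) : Prop :=
  r ∈ K.verts ∧ ∀ v ∈ K.verts, G.ReachW K.edges α (!α) v r

/-- the subgraph `K` is a strong `α`-radial with root `r`. -/
def Sub.IsStrong (K : G.Sub) (α : Bool) (r : V) : Prop :=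
  K.IsRadial α r ∧ ∀ v ∈ K.verts, G.ReachW K.edges (!α) (!α) v r

/-- the subgraph `K` is an almost strong `α`-radial with root `r`. -/
def Sub.IsAlmostStrong (K : G.Sub) (α : Bool) (r : V) : Prop :=
  K.IsRadial α r ∧ (∀ v ∈ K.verts, v ≠ r → G.ReachW K.edges (!α) (!α) v r) ∧
    ¬ G.ReachW K.edges (!α) (!α) r r

/-- the subgraph `K` is a linear `α`-semiradial with root `r`: no loop at `r`,
and no nontrivial `(!α)`-ditrail (within `K`) to `r`. -/
def Sub.IsLinearSR (K : G.Sub) (α : Bool) (r : V) : Prop :=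
  K.IsSemiradial α r ∧ (¬ ∃ e ∈ K.edges, G.fst e = r ∧ G.snd e = r) ∧
    ∀ x p st, G.IsDitrail p x r → (∀ st' ∈ p, st'.1 ∈ K.edges) →
      p.head? = some st → G.ssign st = α

/-- candidate for the linear ground: a linear `α`-semiradial with root `r`
all of whose non-root vertices are linear in `G`. -/
def Sub.IsLinearGroundCand (K : G.Sub) (α : Bool) (r : V) : Prop :=
  K.IsLinearSR α r ∧ ∀ v ∈ K.verts, v ≠ r → G.LinearVtx α r v

/-- candidate for the extended ground over the almost strong ground `H`. -/
def Sub.IsExtCand (H K : G.Sub) (α : Bool) (r : V) : Prop :=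
  H.le K ∧ K.IsRadial α r ∧ ∀ v ∈ K.verts, v ∉ H.verts → G.SublinearVtx α r v

/-- the first shell of the extended ground `I` over the almost strong ground `H`:
shell vertices having an `(α,!α)`-ditrail to `r` within `I` avoiding `V(H) \ {r}`. -/
def firstShell (H I : G.Sub) (α : Bool) (r : V) : Set V :=
  {x | x ∈ I.verts ∧ x ∉ H.verts ∧ G.ReachWA I.edges (H.verts \ {r}) α (!α) x r}

/-- adding new edges to `G`: each `f : F` becomes an edge between `a f` and `b f`
with signs `sa f` and `sb f` at these ends. -/
def addE (G : BG V) {F : Type} (a b : F → V) (sa sb : F → Bool) : BG V where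
  E := G.E ⊕ F
  fst := Sum.elim G.fst a
  snd := Sum.elim G.snd b
  s1 := Sum.elim G.s1 sa
  s2 := Sum.elim G.s2 sb

/-- deleting the edges in `D` from `G`. -/
def delE (G : BG V) (D : Set G.E) : BG V where
  E := {e : G.E // e ∉ D}
  fst e := G.fst e.1
  snd e := G.snd e.1
  s1 e := G.s1 e.1
  s2 e := G.s2 e.1

/-- contracting the vertex set `S` of `G` to the single vertex `r` (deleting the
edges lying within `S`, i.e. the arising loops). -/
noncomputable def contract (G : BG V) (S : Set V) (r : V) : BG V where
  E := {e : G.E // ¬(G.fst e ∈ S ∧ G.snd e ∈ S)}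
  fst e := @ite _ (G.fst e.1 ∈ S) (Classical.propDecidable _) r (G.fst e.1)
  snd e := @ite _ (G.snd e.1 ∈ S) (Classical.propDecidable _) r (G.snd e.1)
  s1 e := G.s1 e.1
  s2 e := G.s2 e.1

/-- a gluing sum `(G; s) ⊕ (H; T)`: every edge-end of `G` at `s` is redirected
to some vertex of `H` (given by `f1`, `f2`), keeping all signs. -/
noncomputable def glue {VG VH : Type} (G : BG VG) (H : BG VH) (s : VG)
    (f1 f2 : G.E → VH) : BG (VG ⊕ VH) where
  E := G.E ⊕ H.E
  fst := Sum.elim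
    (fun e => @ite _ (G.fst e = s) (Classical.propDecidable _)
      (Sum.inr (f1 e)) (Sum.inl (G.fst e)))
    (fun e => Sum.inr (H.fst e))
  snd := Sum.elim
    (fun e => @ite _ (G.snd e = s) (Classical.propDecidable _)
      (Sum.inr (f2 e)) (Sum.inl (G.snd e)))
    (fun e => Sum.inr (H.snd e))
  s1 := Sum.elim G.s1 H.s1
  s2 := Sum.elim G.s2 H.s2

/-- the copy of `H` inside a gluing sum, as a subgraph. -/
noncomputable def glueHcopy {VG VH : Type} (G : BG VG) (H : BG VH) (s : VG)
    (f1 f2 : G.E → VH) : (glue G H s f1 f2).Sub where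
  verts := Set.range Sum.inr
  edges := Set.range Sum.inr
  fst_mem := by rintro _ ⟨e, rfl⟩; exact ⟨H.fst e, rfl⟩
  snd_mem := by rintro _ ⟨e, rfl⟩; exact ⟨H.snd e, rfl⟩

end BG
namespace BG

section Helpers
variable {V : Type} {G : BG V}

lemma bool_resolve {a b : Bool} (h : a ≠ !b) : a = b := by cases a <;> cases b <;> simp_all

lemma src_rev (st : G.Step) : G.src (st.1, !st.2) = G.tgt st := by
  obtain ⟨e, d⟩ := st; cases d <;> simp [src, tgt]

lemma tgt_rev (st : G.Step) : G.tgt (st.1, !st.2) = G.src st := by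
  obtain ⟨e, d⟩ := st; cases d <;> simp [src, tgt]

lemma ssign_rev (st : G.Step) : G.ssign (st.1, !st.2) = G.tsign st := by
  obtain ⟨e, d⟩ := st; cases d <;> simp [ssign, tsign]

lemma tsign_rev (st : G.Step) : G.tsign (st.1, !st.2) = G.ssign st := by
  obtain ⟨e, d⟩ := st; cases d <;> simp [ssign, tsign]

/-- reversal of a ditrail -/
def revT (p : List G.Step) : List G.Step := (p.map (fun st => (st.1, !st.2))).reverse

lemma revT_map_fst (p : List G.Step) :
    (revT p).map Prod.fst = (p.map Prod.fst).reverse := by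
  simp [revT, Function.comp]

lemma revT_head? (p : List G.Step) :
    (revT p).head? = p.getLast?.map (fun st => (st.1, !st.2)) := by
  simp [revT, List.head?_reverse, List.getLast?_map]

lemma revT_getLast? (p : List G.Step) :
    (revT p).getLast? = p.head?.map (fun st => (st.1, !st.2)) := by
  simp [revT, List.getLast?_reverse, List.head?_map]

lemma dt_rev {p : List G.Step} {x y : V} (hp : G.IsDitrail p x y) :
    G.IsDitrail (revT p) y x := by
  obtain ⟨h1, h2, h3, h4, h5⟩ := hp
  refine ⟨?_, ?_, ?_, ?_, ?_⟩
  · rw [revT_map_fst, List.nodup_reverse]; exact h1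
  · rw [List.Chain'] at h2; rw [revT, List.Chain', List.isChain_reverse, List.isChain_map]
    refine h2.imp ?_
    rintro a b ⟨hv, hs⟩
    constructor
    · show G.tgt (b.1, !b.2) = G.src (a.1, !a.2)
      rw [tgt_rev, src_rev, hv]
    · show G.tsign (b.1, !b.2) = !G.ssign (a.1, !a.2)
      rw [tsign_rev, ssign_rev, hs, Bool.not_not]
  · intro st hst
    rw [revT_head?] at hst
    obtain ⟨a, ha, rfl⟩ := Option.map_eq_some_iff.1 hst
    rw [src_rev]; exact h4 a ha
  · intro st hst
    rw [revT_getLast?] at hst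
    obtain ⟨a, ha, rfl⟩ := Option.map_eq_some_iff.1 hst
    rw [tgt_rev]; exact h3 a ha
  · intro h
    have : p = [] := by
      have := congrArg List.length h
      simpa [revT] using this
    exact (h5 this).symm

lemma dt_tail {s : G.Step} {B : List G.Step} {x y : V}
    (hp : G.IsDitrail (s :: B) x y) : G.IsDitrail B (G.tgt s) y := by
  obtain ⟨h1, h2, h3, h4, h5⟩ := hp
  rw [List.Chain', List.isChain_cons] at h2
  refine ⟨(List.nodup_cons.1 h1).2, h2.2, ?_, ?_, ?_⟩
  · intro st hst
    exact (h2.1 st hst).1.symm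
  · intro st hst
    apply h4
    cases B with
    | nil => simp at hst
    | cons b B' => rw [List.getLast?_cons_cons]; exact hst
  · rintro rfl
    have : (s :: ([] : List G.Step)).getLast? = some s := rfl
    exact (h4 s this).symm ▸ rfl

lemma dt_drop {A B : List G.Step} {s : G.Step} {x y : V}
    (hp : G.IsDitrail (A ++ s :: B) x y) : G.IsDitrail (s :: B) (G.src s) y := by
  induction A generalizing x with
  | nil =>
    obtain ⟨h1, h2, h3, h4, h5⟩ := hp
    exact ⟨h1, h2, fun st hst => by simp at hst; subst hst; rfl, h4, by simp⟩
  | cons a A' ih =>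
    exact ih (dt_tail hp)

lemma dt_junction {A B : List G.Step} {s : G.Step} {x y : V}
    (hp : G.IsDitrail (A ++ s :: B) x y) (a : G.Step) (ha : A.getLast? = some a) :
    G.tgt a = G.src s ∧ G.tsign a = !G.ssign s := by
  have h2 := hp.2.1
  rw [List.Chain', List.isChain_append] at h2
  exact h2.2.2 a ha s rfl

lemma dt_prefix {A B : List G.Step} {x y : V}
    (hp : G.IsDitrail (A ++ B) x y) (a : G.Step) (ha : A.getLast? = some a) :
    G.IsDitrail A x (G.tgt a) := by
  obtain ⟨h1, h2, h3, h4, h5⟩ := hp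
  have hAne : A ≠ [] := by rintro rfl; simp at ha
  rw [List.Chain', List.isChain_append] at h2
  refine ⟨?_, h2.1, ?_, ?_, fun h => absurd h hAne⟩
  · rw [List.map_append] at h1; exact h1.of_append_left
  · intro st hst
    apply h3
    rw [List.head?_append_of_ne_nil A hAne]; exact hst
  · intro st hst
    rw [ha] at hst; cases hst; rfl

lemma dt_append {p q : List G.Step} {x y z : V}
    (h1 : G.IsDitrail p x y) (h2 : G.IsDitrail q y z)
    (hdisj : ∀ e ∈ p.map Prod.fst, e ∉ q.map Prod.fst)
    (hj : ∀ a ∈ p.getLast?, ∀ b ∈ q.head?, G.tsign a = !G.ssign b) :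
    G.IsDitrail (p ++ q) x z := by
  obtain ⟨p1, p2, p3, p4, p5⟩ := h1
  obtain ⟨q1, q2, q3, q4, q5⟩ := h2
  refine ⟨?_, ?_, ?_, ?_, ?_⟩
  · rw [List.map_append]
    exact p1.append q1 (List.disjoint_left.2 fun e he => hdisj e he)
  · rw [List.Chain', List.isChain_append]
    refine ⟨p2, q2, fun a ha b hb => ⟨?_, hj a ha b hb⟩⟩
    rw [p4 a ha, q3 b hb]
  · intro st hst
    cases p with
    | nil => rw [p5 rfl]; exact q3 st (by simpa using hst)
    | cons s p' => exact p3 st (by rwa [List.head?_append_of_ne_nil _ (by simp)] at hst)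
  · intro st hst
    rw [List.getLast?_append] at hst
    cases q with
    | nil => rw [← q5 rfl]; exact p4 st (by simpa using hst)
    | cons s q' =>
      apply q4
      have : (s :: q').getLast?.isSome := by
        rw [List.getLast?_eq_getLast (by simp)]; rfl
      rwa [Option.or_of_isSome this] at hst
  · intro h
    rw [List.append_eq_nil_iff] at h
    rw [p5 h.1, q5 h.2]

end Helpers
end BG

namespace BG
section Helpers2
variable {V : Type} {G : BG V}

lemma reachS_intro {x r : V} {β : Bool} (p : List G.Step) (st : G.Step)
    (hp : G.IsDitrail p x r) (hh : p.head? = some st) (hs : G.ssign st = β) :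
    G.ReachS β x r := by
  have hne : p ≠ [] := by rintro rfl; simp at hh
  obtain ⟨b, hb⟩ : ∃ b, p.getLast? = some b :=
    ⟨p.getLast hne, List.getLast?_eq_getLast hne⟩
  refine ⟨G.tsign b, p, hp, fun st' _ => Set.mem_univ _, Set.notMem_empty x,
    fun st' _ => Set.notMem_empty _, ?_, ?_⟩
  · rw [hh]; simp [hs]
  · rw [hb]; simp

lemma reachWS_intro {Es : Set G.E} {x r : V} {β : Bool} (p : List G.Step) (st : G.Step)
    (hp : G.IsDitrail p x r) (hE : ∀ st' ∈ p, st'.1 ∈ Es)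
    (hh : p.head? = some st) (hs : G.ssign st = β) :
    G.ReachWS Es β x r := by
  have hne : p ≠ [] := by rintro rfl; simp at hh
  obtain ⟨b, hb⟩ : ∃ b, p.getLast? = some b :=
    ⟨p.getLast hne, List.getLast?_eq_getLast hne⟩
  refine ⟨G.tsign b, p, hp, hE, Set.notMem_empty x,
    fun st' _ => Set.notMem_empty _, ?_, ?_⟩
  · rw [hh]; simp [hs]
  · rw [hb]; simp

lemma reachS_refl {x : V} {β : Bool} : G.ReachS β x x := by
  refine ⟨!β, [], ⟨by simp, List.isChain_nil, by simp, by simp, fun _ => rfl⟩,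
    by simp, Set.notMem_empty x, by simp, by simp, by simp⟩

lemma reachS_elim {β : Bool} {x r : V} (h : G.ReachS β x r) (hxr : x ≠ r) :
    ∃ p st, G.IsDitrail p x r ∧ p.head? = some st ∧ G.ssign st = β := by
  obtain ⟨β', p, hp, _, _, _, hhead, _⟩ := h
  cases p with
  | nil => exact absurd (hp.2.2.2.2 rfl) hxr
  | cons s p' => exact ⟨s :: p', s, hp, rfl, by simpa using hhead⟩

lemma mem_verts_of_edge (H : G.Sub) {st : G.Step} (h : st.1 ∈ H.edges) :
    G.src st ∈ H.verts ∧ G.tgt st ∈ H.verts := by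
  obtain ⟨e, d⟩ := st
  cases d
  · exact ⟨H.snd_mem e h, H.fst_mem e h⟩
  · exact ⟨H.fst_mem e h, H.snd_mem e h⟩

lemma step_cases (e : G.E) (d d' : Bool) :
    ((e, d') : G.Step) = (e, d) ∨
      (G.src (e, d') = G.tgt (e, d) ∧ G.tgt (e, d') = G.src (e, d) ∧
        G.ssign (e, d') = G.tsign (e, d)) := by
  cases d <;> cases d'
  · exact Or.inl rfl
  · exact Or.inr ⟨rfl, rfl, rfl⟩
  · exact Or.inr ⟨rfl, rfl, rfl⟩
  · exact Or.inl rfl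

lemma adj_of_step (st : G.Step) : G.Adj (G.src st) (G.tgt st) := by
  obtain ⟨e, d⟩ := st
  cases d
  · exact ⟨e, Or.inr ⟨rfl, rfl⟩⟩
  · exact ⟨e, Or.inl ⟨rfl, rfl⟩⟩

lemma first_split {β : Type} {l : List β} {Q : β → Prop} (h : ∃ a ∈ l, Q a) :
    ∃ A a B, l = A ++ a :: B ∧ Q a ∧ ∀ b ∈ A, ¬ Q b := by
  induction l with
  | nil => simp at h
  | cons x l ih =>
    by_cases hx : Q x
    · exact ⟨[], x, l, rfl, hx, by simp⟩
    · obtain ⟨a, ha, hQ⟩ := h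
      rcases List.mem_cons.1 ha with rfl | ha'
      · exact absurd hQ hx
      · obtain ⟨A, a', B, rfl, h1, h2⟩ := ih ⟨a, ha', hQ⟩
        refine ⟨x :: A, a', B, rfl, h1, ?_⟩
        rintro b hb
        rcases List.mem_cons.1 hb with rfl | hb'
        · exact hx
        · exact h2 b hb'

lemma Hditrail (H : G.Sub) {α : Bool} {r : V} (hH1 : H.IsLinearSR α r) {u : V}
    (hu : u ∈ H.verts) :
    ∃ q, G.IsDitrail q u r ∧ (∀ st ∈ q, st.1 ∈ H.edges) ∧
      (∀ st, q.head? = some st → G.ssign st = α) ∧ (q = [] → u = r) := by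
  obtain ⟨β, q, hq, hqE, _, _, _, _⟩ := hH1.1.2 u hu
  exact ⟨q, hq, hqE, fun st hst => hH1.2.2 u q st hq hqE hst, hq.2.2.2.2⟩

lemma cons_ditrail (H : G.Sub) {α : Bool} {r : V} (hH1 : H.IsLinearSR α r)
    (e : G.E) (d : Bool) (hsrc : G.src (e, d) ∉ H.verts)
    (htgt : G.tgt (e, d) ∈ H.verts) (hts : G.tsign (e, d) = !α) :
    ∃ p, G.IsDitrail p (G.src (e, d)) r ∧ (∀ st ∈ p, st.1 ∈ insert e H.edges) ∧
      p.head? = some (e, d) := by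
  obtain ⟨q, hq, hqE, hqh, hqe⟩ := Hditrail H hH1 htgt
  have heH : e ∉ H.edges := fun h => hsrc (mem_verts_of_edge H (st := (e, d)) h).1
  refine ⟨(e, d) :: q, ⟨?_, ?_, ?_, ?_, by simp⟩, ?_, rfl⟩
  · simp only [List.map_cons]
    rw [List.nodup_cons]
    refine ⟨fun hmem => ?_, hq.1⟩
    obtain ⟨st', hst', hfst⟩ := List.mem_map.1 hmem
    exact heH (hfst ▸ hqE st' hst')
  · rw [List.Chain', List.isChain_cons]
    refine ⟨fun b hb => ⟨(hq.2.2.1 b hb).symm, ?_⟩, hq.2.1⟩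
    rw [hts, hqh b hb]
  · intro st' h
    simp only [List.head?_cons, Option.some.injEq] at h
    subst h; rfl
  · cases q with
    | nil =>
      intro st' h
      simp only [List.getLast?_singleton, Option.some.injEq] at h
      subst h; exact hqe rfl
    | cons b q' =>
      intro st' h
      rw [List.getLast?_cons_cons] at h
      exact hq.2.2.2.1 st' h
  · intro st' h
    rcases List.mem_cons.1 h with rfl | h'
    · exact Set.mem_insert e _
    · exact Set.mem_insert_of_mem e (hqE st' h')

end Helpers2
end BG

namespace BG
section Ext
variable {V : Type} {G : BG V}

lemma ext_absurd {α : Bool} {r : V} (H : G.Sub) (hH : H.IsLinearGroundCand α r)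
    (hmax : ∀ K : G.Sub, K.IsLinearGroundCand α r → K.le H)
    (e : G.E) (d : Bool) (hsrc : G.src (e, d) ∉ H.verts) (htgt : G.tgt (e, d) ∈ H.verts)
    (hss : G.ssign (e, d) = α) (hts : G.tsign (e, d) = !α ∨ G.tgt (e, d) = r)
    (hlin : G.LinearVtx α r (G.src (e, d))) : False := by
  obtain ⟨hH1, hHlin⟩ := hH
  have hrH : r ∈ H.verts := hH1.1.1
  have hfs : (G.fst e = G.src (e, d) ∨ G.fst e = G.tgt (e, d)) ∧
      (G.snd e = G.src (e, d) ∨ G.snd e = G.tgt (e, d)) := by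
    cases d
    · exact ⟨Or.inr rfl, Or.inl rfl⟩
    · exact ⟨Or.inl rfl, Or.inr rfl⟩
  let K : G.Sub := {
    verts := insert (G.src (e, d)) H.verts
    edges := insert e H.edges
    fst_mem := by
      intro f hf
      rcases Set.mem_insert_iff.1 hf with rfl | hf
      · rcases hfs.1 with h | h
        · rw [h]; exact Set.mem_insert _ _
        · rw [h]; exact Set.mem_insert_of_mem _ htgt
      · exact Set.mem_insert_of_mem _ (H.fst_mem f hf)
    snd_mem := by
      intro f hf
      rcases Set.mem_insert_iff.1 hf with rfl | hf
      · rcases hfs.2 with h | h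
        · rw [h]; exact Set.mem_insert _ _
        · rw [h]; exact Set.mem_insert_of_mem _ htgt
      · exact Set.mem_insert_of_mem _ (H.snd_mem f hf) }
  have hKedges : K.edges = insert e H.edges := rfl
  have hreach : G.ReachWS K.edges α (G.src (e, d)) r := by
    by_cases ht : G.tsign (e, d) = !α
    · obtain ⟨p, hp, hpE, hph⟩ := cons_ditrail H hH1 e d hsrc htgt ht
      exact reachWS_intro p (e, d) hp (by rw [hKedges]; exact hpE) hph hss
    · have htr : G.tgt (e, d) = r := hts.resolve_left ht
      refine reachWS_intro [(e, d)] (e, d) ⟨by simp, List.isChain_singleton _, ?_, ?_, by simp⟩ ?_ rfl hss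
      · intro st h
        simp only [List.head?_cons, Option.some.injEq] at h; subst h; rfl
      · intro st h
        simp only [List.getLast?_singleton, Option.some.injEq] at h; subst h; exact htr
      · intro st h
        rcases List.mem_cons.1 h with rfl | h'
        · exact Set.mem_insert _ _
        · simp at h'
  have hKsemi : K.IsSemiradial α r := by
    refine ⟨Set.mem_insert_of_mem _ hrH, ?_⟩
    intro v hv
    rcases Set.mem_insert_iff.1 hv with rfl | hv
    · exact hreach
    · obtain ⟨β, p, hp, hpE, h3, h4, h5, h6⟩ := hH1.1.2 v hv
      exact ⟨β, p, hp, fun st h => Set.mem_insert_of_mem _ (hpE st h), h3, h4, h5, h6⟩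
  have hKloop : ¬ ∃ f ∈ K.edges, G.fst f = r ∧ G.snd f = r := by
    rintro ⟨f, hf, h1, h2⟩
    rcases Set.mem_insert_iff.1 hf with rfl | hf
    · apply hsrc
      have hxr : G.src (f, d) = r := by
        cases d
        · exact h2
        · exact h1
      rw [hxr]; exact hrH
    · exact hH1.2.1 ⟨f, hf, h1, h2⟩
  have hKcond3 : ∀ w p st, G.IsDitrail p w r → (∀ st' ∈ p, st'.1 ∈ K.edges) →
      p.head? = some st → G.ssign st = α := by
    intro w p st hp hpE hph
    by_cases hmem : e ∈ p.map Prod.fst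
    · obtain ⟨s, hsmem, hsfst⟩ := List.mem_map.1 hmem
      obtain ⟨e', d'⟩ := s
      have he' : e' = e := hsfst
      subst he'
      obtain ⟨A, B, hAB⟩ := List.append_of_mem hsmem
      subst hAB
      have hnd := hp.1
      rw [List.map_append, List.map_cons, List.nodup_append] at hnd
      have heA : e' ∉ A.map Prod.fst := fun h => hnd.2.2 _ h _ List.mem_cons_self rfl
      have heB : e' ∉ B.map Prod.fst := (List.nodup_cons.1 hnd.2.1).1
      have hB : G.IsDitrail B (G.tgt (e', d')) r := dt_tail (dt_drop hp)
      have hBH : ∀ st' ∈ B, st'.1 ∈ H.edges := by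
        intro st' h
        rcases Set.mem_insert_iff.1
            (hpE st' (by simp [List.mem_append, List.mem_cons, h])) with h1 | h1
        · exact absurd (h1 ▸ List.mem_map_of_mem (f := Prod.fst) h) heB
        · exact h1
      have himp : G.tgt (e', d') ≠ G.src (e', d) := by
        intro hteq
        cases B with
        | nil =>
          have h0 : G.tgt (e', d') = r := hB.2.2.2.2 rfl
          exact hsrc (by rw [← hteq, h0]; exact hrH)
        | cons b B' =>
          have hsb : G.src b = G.tgt (e', d') := hB.2.2.1 b rfl
          have hbH : G.src b ∈ H.verts :=
            (mem_verts_of_edge H (hBH b (List.mem_cons_self))).1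
          exact hsrc (by rw [← hteq, ← hsb]; exact hbH)
      rcases step_cases (G := G) e' d d' with heq | ⟨h1, h2, h3⟩
      · have hd : d' = d := by injection heq
        subst hd
        cases A with
        | nil =>
          have hst : st = (e', d') := by
            simp only [List.nil_append, List.head?_cons, Option.some.injEq] at hph
            exact hph.symm
          rw [hst]; exact hss
        | cons a A' =>
          exfalso
          have hAne : (a :: A') ≠ [] := by simp
          have haL := List.getLast?_eq_getLast hAne
          have hj := dt_junction hp _ haL
          have haLmem : (a :: A').getLast hAne ∈ a :: A' := List.getLast_mem hAne
          have haLH : ((a :: A').getLast hAne).1 ∈ H.edges := by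
            rcases Set.mem_insert_iff.1
                (hpE _ (List.mem_append_left _ haLmem)) with h1 | h1
            · exact absurd (h1 ▸ List.mem_map_of_mem (f := Prod.fst) haLmem) heA
            · exact h1
          exact hsrc (hj.1 ▸ (mem_verts_of_edge H haLH).2)
      · exact absurd h2 himp
    · apply hH1.2.2 w p st hp ?_ hph
      intro st' h
      rcases Set.mem_insert_iff.1 (hpE st' h) with h1 | h1
      · exact absurd (h1 ▸ List.mem_map_of_mem (f := Prod.fst) h) hmem
      · exact h1
  have hK : K.IsLinearGroundCand α r := by
    refine ⟨⟨hKsemi, hKloop, hKcond3⟩, ?_⟩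
    intro v hv hvr
    rcases Set.mem_insert_iff.1 hv with rfl | hv
    · exact hlin
    · exact hHlin v hv hvr
  exact hsrc ((hmax K hK).1 (Set.mem_insert _ _))

end Ext
end BG

namespace BG
section Part1
variable {V : Type} {G : BG V}

lemma single_ditrail {x y : V} (st : G.Step) (h1 : G.src st = x) (h2 : G.tgt st = y) :
    G.IsDitrail [st] x y := by
  refine ⟨by simp, List.isChain_singleton _, ?_, ?_, by simp⟩
  · intro s h; simp only [List.head?_cons, Option.some.injEq] at h; subst h; exact h1
  · intro s h; simp only [List.getLast?_singleton, Option.some.injEq] at h; subst h; exact h2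

lemma no_bad_diear {α : Bool} {r : V} (H : G.Sub)
    (hsharp : G.SharpAt α r) (hH : H.IsLinearGroundCand α r) :
    ¬ ∃ p : List G.Step, G.IsSimpleDiear H.verts p ∧
        p.head?.map G.ssign = some (!α) ∧ p.getLast?.map G.tsign = some (!α) := by
  rintro ⟨p, ⟨hpne, u, v, hp, huH, hvH, hint⟩, hh, hl⟩
  obtain ⟨st0, hh0, hs0⟩ := Option.map_eq_some_iff.1 hh
  obtain ⟨stl, hl0, hsl⟩ := Option.map_eq_some_iff.1 hl
  by_cases hvr : v = r
  · by_cases hur : u = r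
    · rw [hur, hvr] at hp
      cases hdl : p.dropLast with
      | nil =>
        have hp1 : p = [st0] := by
          cases p with
          | nil => simp at hh0
          | cons s t =>
            cases t with
            | nil => simp only [List.head?_cons, Option.some.injEq] at hh0; rw [hh0]
            | cons s' t' => simp [List.dropLast] at hdl
        have hse : stl = st0 := by
          rw [hp1] at hl0; simpa using hl0.symm
        have hadj : G.Adj r r := by
          have h1 : G.src st0 = r := hp.2.2.1 st0 hh0
          have h2 : G.tgt st0 = r := by rw [← hse]; exact hp.2.2.2.1 stl hl0
          have := adj_of_step st0
          rwa [h1, h2] at this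
        exact (hsharp r hadj).2 reachS_refl
      | cons a A' =>
        have hA : p.dropLast ≠ [] := by rw [hdl]; simp
        have hgl : p.getLast hpne = stl := by
          have h := List.getLast?_eq_getLast hpne
          rw [h] at hl0
          exact Option.some_inj.1 hl0
        have hsplit : p.dropLast ++ [stl] = p := by
          rw [← hgl]; exact List.dropLast_append_getLast hpne
        have hp' : G.IsDitrail (p.dropLast ++ [stl]) r r := by rw [hsplit]; exact hp
        have haL := List.getLast?_eq_getLast hA
        have hj := dt_junction hp' _ haL
        have haLmem : p.dropLast.getLast hA ∈ p.dropLast := List.getLast_mem hA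
        have hwH : G.tgt (p.dropLast.getLast hA) ∉ H.verts :=
          hint _ (List.mem_map_of_mem (f := G.tgt) haLmem)
        have htr : G.tgt stl = r := hp.2.2.2.1 stl (by rw [← hsplit, List.getLast?_append]; rfl)
        have hadj : G.Adj (G.src stl) r := by
          have := adj_of_step stl; rwa [htr] at this
        have hno : ¬ G.ReachS (!α) (G.src stl) r := (hsharp _ hadj).2
        by_cases hsp : G.ssign stl = !α
        · exact hno (reachS_intro [stl] stl (single_ditrail stl rfl htr) rfl hsp)
        · have hta : G.tsign (p.dropLast.getLast hA) = !α := by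
            rw [hj.2, bool_resolve hsp]
          have hpre := dt_prefix hp' _ haL
          have hrev := dt_rev hpre
          have hhead : (revT p.dropLast).head? =
              some ((p.dropLast.getLast hA).1, !(p.dropLast.getLast hA).2) := by
            rw [revT_head?, haL, Option.map_some]
          have hre : G.ReachS (!α) (G.tgt (p.dropLast.getLast hA)) r :=
            reachS_intro _ _ hrev hhead (by rw [ssign_rev]; exact hta)
          rw [hj.1] at hre
          exact hno hre
    · rw [hvr] at hp
      exact (hH.2 u huH hur).2 (reachS_intro p st0 hp hh0 hs0)
  · have hvlin := hH.2 v hvH hvr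
    by_cases hur : u = r
    · have hrev := dt_rev hp
      rw [hur] at hrev
      exact hvlin.2 (reachS_intro _ _ hrev (by rw [revT_head?, hl0]; rfl)
        (by rw [ssign_rev]; exact hsl))
    · have hulin := hH.2 u huH hur
      cases p with
      | nil => exact hpne rfl
      | cons s t =>
        cases t with
        | nil =>
          have hs : s = st0 := by simpa using hh0
          subst hs
          have hstl0 : stl = s := by simpa using hl0.symm
          rw [hstl0] at hsl
          have hsrc0 : G.src s = u := hp.2.2.1 s rfl
          have htgt0 : G.tgt s = v := hp.2.2.2.1 s (by simp)
          obtain ⟨q, b0, hq, hqh, hqs⟩ := reachS_elim hulin.1 hur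
          by_cases he : s.1 ∈ q.map Prod.fst
          · obtain ⟨s', hs'm, hs'f⟩ := List.mem_map.1 he
            obtain ⟨A, B, hqsplit⟩ := List.append_of_mem hs'm
            rw [hqsplit] at hq
            have hdrop := dt_drop hq
            obtain ⟨e0, d0⟩ := s
            obtain ⟨e0', d'⟩ := s'
            have he0 : e0' = e0 := hs'f
            subst he0
            rcases step_cases (G := G) e0' d0 d' with heq | ⟨h1, h2, h3⟩
            · rw [heq] at hdrop
              rw [hsrc0] at hdrop
              exact hulin.2 (reachS_intro _ _ hdrop rfl hs0)
            · rw [h1, htgt0] at hdrop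
              exact hvlin.2 (reachS_intro _ _ hdrop rfl (h3.trans hsl))
          · have hrevs : G.IsDitrail [(s.1, !s.2)] v u :=
              single_ditrail _ (by rw [src_rev]; exact htgt0) (by rw [tgt_rev]; exact hsrc0)
            have hdisj : ∀ e' ∈ [((s.1, !s.2) : G.Step)].map Prod.fst,
                e' ∉ q.map Prod.fst := by
              intro e' he'
              simp only [List.map_cons, List.map_nil, List.mem_singleton] at he'
              subst he'; exact he
            have hjunc : ∀ a ∈ [((s.1, !s.2) : G.Step)].getLast?, ∀ b ∈ q.head?,
                G.tsign a = !G.ssign b := by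
              intro a ha b hb
              have ha' : a = (s.1, !s.2) := by simpa using ha.symm
              subst ha'
              rw [tsign_rev, hs0]
              have hb' : b0 = b := by
                rw [Option.mem_def, hqh] at hb
                exact Option.some_inj.1 hb
              rw [← hb', hqs]
            have happ := dt_append hrevs hq hdisj hjunc
            exact hvlin.2 (reachS_intro _ (s.1, !s.2) happ
              (by rw [List.head?_append_of_ne_nil _ (by simp)]; rfl)
              (by rw [ssign_rev]; exact hsl))
        | cons s' t' =>
          have hpne2 : (s :: s' :: t' : List G.Step) ≠ [] := by simp
          have hA : (s :: s' :: t').dropLast ≠ [] := by simp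
          have hsplit := List.dropLast_append_getLast hpne2
          have haL := List.getLast?_eq_getLast hA
          have hp' : G.IsDitrail ((s :: s' :: t').dropLast ++
              [(s :: s' :: t').getLast hpne2]) u v := by
            rw [hsplit]; exact hp
          have hj := dt_junction hp' _ haL
          have haLmem := List.getLast_mem hA
          have hsrcL : G.src ((s :: s' :: t').getLast hpne2) ∉ H.verts := by
            rw [← hj.1]; exact hint _ (List.mem_map_of_mem (f := G.tgt) haLmem)
          have hPE : ∀ st ∈ (s :: s' :: t' : List G.Step), st.1 ∉ H.edges := by
            intro st hst hstH
            rcases (by rw [← hsplit] at hst; exact List.mem_append.1 hst :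
                st ∈ (s :: s' :: t').dropLast ∨ st ∈ [(s :: s' :: t').getLast hpne2])
                with h' | h'
            · exact hint _ (List.mem_map_of_mem (f := G.tgt) h') (mem_verts_of_edge H hstH).2
            · have hst2 : st = (s :: s' :: t').getLast hpne2 := by simpa using h'
              rw [hst2] at hstH
              exact hsrcL (mem_verts_of_edge H hstH).1
          obtain ⟨q, hq, hqE, hqh, hqe⟩ := Hditrail H hH.1 huH
          have hrev := dt_rev hp
          have hdisj : ∀ e' ∈ (revT (s :: s' :: t')).map Prod.fst,
              e' ∉ q.map Prod.fst := by
            intro e' he' hmem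
            rw [revT_map_fst, List.mem_reverse] at he'
            obtain ⟨st', hst', rfl⟩ := List.mem_map.1 he'
            obtain ⟨st'', hst'', hfst⟩ := List.mem_map.1 hmem
            exact hPE st' hst' (hfst ▸ hqE st'' hst'')
          have hjunc : ∀ a ∈ (revT (s :: s' :: t')).getLast?, ∀ b ∈ q.head?,
              G.tsign a = !G.ssign b := by
            intro a ha b hb
            rw [Option.mem_def, revT_getLast?, hh0, Option.map_some] at ha
            have ha' : a = (st0.1, !st0.2) := (Option.some_inj.1 ha).symm
            subst ha'
            rw [tsign_rev, hs0, hqh b (Option.mem_def.1 hb)]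
          have happ := dt_append hrev hq hdisj hjunc
          exact hvlin.2 (reachS_intro _ (stl.1, !stl.2) happ
            (by rw [List.head?_append_of_ne_nil _ (by simp [revT]), revT_head?, hl0]; rfl)
            (by rw [ssign_rev]; exact hsl))

end Part1
end BG

namespace BG
section Final
variable {V : Type} {G : BG V}

lemma bool_resolve2 {a b : Bool} (h : a ≠ b) : a = !b := by
  cases a <;> cases b <;> simp_all

lemma abs_core {α : Bool} {r : V} (H : G.Sub) (hG : G.IsSemiradial α r)
    (hH : H.IsLinearGroundCand α r)
    (hmax : ∀ K : G.Sub, K.IsLinearGroundCand α r → K.le H)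
    (e : G.E) (d : Bool) (hsrc : G.src (e, d) ∉ H.verts)
    (htgt : G.tgt (e, d) ∈ H.verts) (hts : G.tsign (e, d) = !α) :
    G.AbsoluteVtx r (G.src (e, d)) := by
  intro β
  by_cases hβ : β = α
  · rw [hβ]; exact hG _
  · rw [bool_resolve2 hβ]
    by_contra hno
    by_cases hs : G.ssign (e, d) = !α
    · obtain ⟨p, hp, hpE, hph⟩ := cons_ditrail H hH.1 e d hsrc htgt hts
      exact hno (reachS_intro p (e, d) hp hph hs)
    · exact ext_absurd H hH hmax e d hsrc htgt (bool_resolve hs) (Or.inl hts)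
        ⟨hG _, hno⟩

end Final
end BG

theorem stmt9 {V : Type} {G : BG V} (α : Bool) (r : V)
    (hG : G.IsSemiradial α r) (hsharp : G.SharpAt α r)
    (H : G.Sub) (hH : H.IsLinearGroundCand α r)
    (hmax : ∀ K : G.Sub, K.IsLinearGroundCand α r → K.le H)
    (hne : ∃ v, v ∉ H.verts) :
    (¬ ∃ p : List G.Step, G.IsSimpleDiear H.verts p ∧
        p.head?.map G.ssign = some (!α) ∧ p.getLast?.map G.tsign = some (!α)) ∧
    (∃ e : G.E, G.CutSign H.verts (!α) e) ∧
    (∀ e : G.E, G.CutSign H.verts (!α) e →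
      (G.fst e ∉ H.verts → G.AbsoluteVtx r (G.fst e)) ∧
      (G.snd e ∉ H.verts → G.AbsoluteVtx r (G.snd e))) := by
  refine ⟨BG.no_bad_diear H hsharp hH, ?_, ?_⟩
  · by_contra hno
    push_neg at hno
    obtain ⟨v, hv⟩ := hne
    have hrH : r ∈ H.verts := hH.1.1.1
    have hvr : v ≠ r := fun h => hv (h ▸ hrH)
    obtain ⟨p, st0, hp, hh0, hs0⟩ := BG.reachS_elim (hG v) hvr
    have hex : ∃ st ∈ p, G.tgt st ∈ H.verts := by
      have hpne : p ≠ [] := by rintro rfl; simp at hh0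
      refine ⟨p.getLast hpne, List.getLast_mem hpne, ?_⟩
      rw [hp.2.2.2.1 _ (List.getLast?_eq_getLast hpne)]; exact hrH
    obtain ⟨A, st, B, hsplit, hstH, hAout⟩ := BG.first_split hex
    rw [hsplit] at hp
    have hdrop := BG.dt_drop hp
    have hsrcout : G.src st ∉ H.verts := by
      cases A with
      | nil =>
        have hsv : G.src st = v := hp.2.2.1 st (by simp)
        rw [hsv]; exact hv
      | cons a A' =>
        have hAne : (a :: A') ≠ [] := by simp
        have hj := BG.dt_junction hp _ (List.getLast?_eq_getLast hAne)
        rw [← hj.1]; exact hAout _ (List.getLast_mem hAne)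
    have hts : G.tsign st = α := by
      have hcut : G.CutSign H.verts (G.tsign st) st.1 := by
        obtain ⟨e1, d1⟩ := st
        cases d1
        · exact Or.inl ⟨hstH, hsrcout, rfl⟩
        · exact Or.inr ⟨hstH, hsrcout, rfl⟩
      by_contra hne'
      exact hno _ ((BG.bool_resolve2 hne') ▸ hcut)
    have htr : G.tgt st = r := by
      by_contra htne
      have hB := BG.dt_tail hdrop
      cases B with
      | nil => exact htne (hB.2.2.2.2 rfl)
      | cons b B' =>
        have hchain : G.tsign st = !G.ssign b := by
          have hc := hdrop.2.1
          rw [List.Chain', List.isChain_cons] at hc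
          exact (hc.1 b rfl).2
        have hsb : G.ssign b = !α := by
          rw [hts] at hchain
          rw [hchain, Bool.not_not]
        have hr : G.ReachS (!α) (G.tgt st) r := BG.reachS_intro _ b hB rfl hsb
        exact (hH.2 _ hstH htne).2 hr
    have hadj : G.Adj (G.src st) r := by
      have := BG.adj_of_step st; rwa [htr] at this
    have hlin := hsharp _ hadj
    have hss' : G.ssign st = α := by
      by_contra h
      exact hlin.2 (BG.reachS_intro [st] st (BG.single_ditrail st rfl htr) rfl
        (BG.bool_resolve2 h))
    exact BG.ext_absurd H hH hmax st.1 st.2 hsrcout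
      (by show G.tgt st ∈ H.verts; rw [htr]; exact hrH) hss' (Or.inr htr)
      ⟨hG _, hlin.2⟩
  · intro e hce
    constructor
    · intro hfst
      rcases hce with ⟨h1, h2, h3⟩ | ⟨h1, h2, h3⟩
      · exact absurd h1 hfst
      · exact BG.abs_core H hG hH hmax e true h2 h1 h3
    · intro hsnd
      rcases hce with ⟨h1, h2, h3⟩ | ⟨h1, h2, h3⟩
      · exact BG.abs_core H hG hH hmax e false h2 h1 h3
      · exact absurd h1 hsnd
end

section
/- Let α ∈ {+,−} and let G be an α-radial with sublinear root r. Let H be the almost strong ground of G. Then every vertex of G adjacent to a vertex of V(H)∖{r} (other than vertices inside H) is sublinear in G. -/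
namespace BG

variable {V : Type} {G : BG V}

-- helper lemmas
lemma chain'_rel {A : Type*} {R : A → A → Prop} {l : List A} (h : List.Chain' R l)
    {k : ℕ} {a b : A} (ha : l[k]? = some a) (hb : l[k+1]? = some b) : R a b := by
  obtain ⟨hk1, hb'⟩ := List.getElem?_eq_some_iff.mp hb
  obtain ⟨hk, ha'⟩ := List.getElem?_eq_some_iff.mp ha
  have := List.isChain_iff_getElem.mp h k (by omega)
  simpa [List.get_eq_getElem, ha', hb'] using this

lemma getLast?_drop_of_ne_nil {A : Type*} {l : List A} {n : ℕ} (h : l.drop n ≠ []) :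
    (l.drop n).getLast? = l.getLast? := by
  conv_rhs => rw [← List.take_append_drop n l]
  rw [List.getLast?_append]
  rcases hh : (l.drop n).getLast? with _ | a
  · exact absurd (List.getLast?_eq_none_iff.mp hh) h
  · rfl

lemma head?_append' {A : Type*} {l l' : List A} {a : A} (h : l.head? = some a) :
    (l ++ l').head? = some a := by
  rcases l with _ | ⟨b, t⟩
  · simp at h
  · simpa using h

lemma getLast?_append' {A : Type*} {l l' : List A} {b : A} (h : l'.getLast? = some b) :
    (l ++ l').getLast? = some b := by
  rw [List.getLast?_append, h]; rfl

def rv (G : BG V) (st : G.Step) : G.Step := (st.1, !st.2)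

@[simp] lemma rv_fst (st : G.Step) : (G.rv st).1 = st.1 := rfl
@[simp] lemma src_rv (st : G.Step) : G.src (G.rv st) = G.tgt st := by
  rcases st with ⟨e, b⟩; cases b <;> simp [rv, src, tgt]
@[simp] lemma tgt_rv (st : G.Step) : G.tgt (G.rv st) = G.src st := by
  rcases st with ⟨e, b⟩; cases b <;> simp [rv, src, tgt]
@[simp] lemma ssign_rv (st : G.Step) : G.ssign (G.rv st) = G.tsign st := by
  rcases st with ⟨e, b⟩; cases b <;> simp [rv, ssign, tsign]
@[simp] lemma tsign_rv (st : G.Step) : G.tsign (G.rv st) = G.ssign st := by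
  rcases st with ⟨e, b⟩; cases b <;> simp [rv, ssign, tsign]

lemma src_or (st : G.Step) :
    (G.src st = G.fst st.1 ∧ G.tgt st = G.snd st.1) ∨
    (G.src st = G.snd st.1 ∧ G.tgt st = G.fst st.1) := by
  rcases st with ⟨e, b⟩; cases b <;> simp [src, tgt]

def revW (G : BG V) (p : List G.Step) : List G.Step := (p.map G.rv).reverse

lemma revW_head? (p : List G.Step) : (G.revW p).head? = p.getLast?.map G.rv := by
  rw [revW, List.head?_reverse, List.getLast?_map]

lemma revW_getLast? (p : List G.Step) : (G.revW p).getLast? = p.head?.map G.rv := by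
  rw [revW, List.getLast?_reverse, List.head?_map]

lemma mem_revW {st : G.Step} {p : List G.Step} (h : st ∈ G.revW p) :
    ∃ s ∈ p, st = G.rv s := by
  rw [revW, List.mem_reverse, List.mem_map] at h
  obtain ⟨s, hs, h⟩ := h
  exact ⟨s, hs, h.symm⟩

lemma IsDitrail.rev {p : List G.Step} {x y : V} (h : G.IsDitrail p x y) :
    G.IsDitrail (G.revW p) y x := by
  obtain ⟨hn, hc, hh, hl, he⟩ := h
  refine ⟨?_, ?_, ?_, ?_, ?_⟩
  · have hmap : (G.revW p).map Prod.fst = (p.map Prod.fst).reverse := by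
      rw [revW, List.map_reverse, List.map_map]
      rfl
    rw [hmap]
    exact List.nodup_reverse.mpr hn
  · rw [revW, List.Chain', List.isChain_reverse, List.isChain_map]
    refine hc.imp ?_
    rintro a b ⟨h1, h2⟩
    refine ⟨by simp [h1], by simp [h2, Bool.not_not]⟩
  · intro st hst
    rw [revW_head?] at hst
    obtain ⟨b, hb, rfl⟩ := Option.map_eq_some_iff.mp hst
    rw [src_rv]
    exact hl b hb
  · intro st hst
    rw [revW_getLast?] at hst
    obtain ⟨b, hb, rfl⟩ := Option.map_eq_some_iff.mp hst
    rw [tgt_rv]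
    exact hh b hb
  · intro h0
    have : p = [] := by simpa [revW] using h0
    exact (he this).symm

lemma IsDitrail.append {p q : List G.Step} {x y z : V}
    (hp : G.IsDitrail p x y) (hq : G.IsDitrail q y z)
    (hdisj : ∀ s ∈ p, ∀ s' ∈ q, s.1 ≠ s'.1)
    (hsg : ∀ a b, p.getLast? = some a → q.head? = some b → G.tsign a = !G.ssign b) :
    G.IsDitrail (p ++ q) x z := by
  obtain ⟨hn1, hc1, hh1, hl1, he1⟩ := hp
  obtain ⟨hn2, hc2, hh2, hl2, he2⟩ := hq
  refine ⟨?_, ?_, ?_, ?_, ?_⟩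
  · rw [List.map_append, List.nodup_append]
    refine ⟨hn1, hn2, ?_⟩
    intro f hf1 g hf2 hfg
    obtain ⟨s, hs, rfl⟩ := List.mem_map.mp hf1
    obtain ⟨s', hs', he⟩ := List.mem_map.mp hf2
    exact hdisj s hs s' hs' (hfg.trans he.symm)
  · rw [List.Chain', List.isChain_append]
    refine ⟨hc1, hc2, fun a ha b hb => ⟨?_, hsg a b ha hb⟩⟩
    rw [hl1 a ha, hh2 b hb]
  · intro st hst
    rcases p with _ | ⟨c, p'⟩
    · rw [he1 rfl]
      exact hh2 st (by simpa using hst)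
    · exact hh1 st (by simpa using hst)
  · intro st hst
    rcases hq0 : q with _ | ⟨c, q'⟩
    · subst hq0
      rw [← he2 rfl]
      exact hl1 st (by simpa using hst)
    · subst hq0
      have h2 : (c :: q').getLast?.isSome := List.getLast?_isSome.mpr (by simp)
      obtain ⟨d, hd2⟩ := Option.isSome_iff_exists.mp h2
      rw [List.getLast?_append, hd2] at hst
      have hds : d = st := by simpa using hst
      subst hds
      exact hl2 d hd2
  · intro h0
    rw [List.append_eq_nil_iff] at h0
    rw [he1 h0.1, he2 h0.2]

lemma ditrail_split {p q : List G.Step} {x z : V} {b : G.Step}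
    (h : G.IsDitrail (p ++ q) x z) (hq : q.head? = some b) :
    G.IsDitrail p x (G.src b) ∧ G.IsDitrail q (G.src b) z := by
  obtain ⟨hn, hc, hh, hl, he⟩ := h
  rw [List.map_append, List.nodup_append] at hn
  rw [List.Chain', List.isChain_append] at hc
  have hq0 : q ≠ [] := by rintro rfl; simp at hq
  constructor
  · refine ⟨hn.1, hc.1, ?_, ?_, ?_⟩
    · intro st hst
      rcases p with _ | ⟨c, p'⟩
      · simp at hst
      · exact hh st (by simpa using hst)
    · intro st hst
      exact (hc.2.2 st hst b hq).1
    · rintro rfl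
      exact (hh b (by simpa using hq)).symm
  · refine ⟨hn.2.1, hc.2.1, ?_, ?_, ?_⟩
    · intro st hst
      rw [hq] at hst
      rw [← Option.some.inj hst]
    · intro st hst
      exact hl st (getLast?_append' hst)
    · intro h0
      exact absurd h0 hq0


lemma reach_elim {Es : Set G.E} {A : Set V} {s β : Bool} {x y : V}
    (h : G.ReachWA Es A s β x y) (hxy : x ≠ y) :
    ∃ q a b, G.IsDitrail q x y ∧ (∀ st ∈ q, st.1 ∈ Es) ∧
      q.head? = some a ∧ G.ssign a = s ∧ q.getLast? = some b ∧ G.tsign b = β := by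
  obtain ⟨q, hd, he, -, -, hh, hl⟩ := h
  have hq : q ≠ [] := fun h0 => hxy (hd.2.2.2.2 h0)
  rcases q with _ | ⟨a, q'⟩
  · exact absurd rfl hq
  obtain ⟨b, hb⟩ := Option.isSome_iff_exists.mp
    (List.getLast?_isSome.mpr (show (a :: q') ≠ [] by simp))
  refine ⟨a :: q', a, b, hd, he, rfl, ?_, hb, ?_⟩
  · simpa using hh
  · rw [hb] at hl
    simpa using hl

lemma reachW_intro {Es : Set G.E} {s β : Bool} {x y : V} (q : List G.Step) (a b : G.Step)
    (hd : G.IsDitrail q x y) (he : ∀ st ∈ q, st.1 ∈ Es)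
    (hh : q.head? = some a) (ha : G.ssign a = s)
    (hl : q.getLast? = some b) (hb : G.tsign b = β) :
    G.ReachW Es s β x y :=
  ⟨q, hd, he, by simp, by simp, by rw [hh]; simpa using ha, by rw [hl]; simpa using hb⟩

lemma reachW_mono {Es Es' : Set G.E} (hss : Es ⊆ Es') {s β : Bool} {x y : V}
    (h : G.ReachW Es s β x y) : G.ReachW Es' s β x y := by
  obtain ⟨q, hd, he, h3, h4, h5, h6⟩ := h
  exact ⟨q, hd, fun st hst => hss (he st hst), h3, h4, h5, h6⟩

lemma cont_strong {H : G.Sub} {α : Bool} {r : V} (hH : H.IsAlmostStrong α r)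
    {u : V} (hu : u ∈ H.verts) (hur : u ≠ r) (s : Bool) :
    ∃ q a b, G.IsDitrail q u r ∧ (∀ st ∈ q, st.1 ∈ H.edges) ∧
      q.head? = some a ∧ G.ssign a = s ∧ q.getLast? = some b ∧ G.tsign b = !α := by
  rcases Bool.eq_or_eq_not s α with hs | hs
  · subst hs
    exact reach_elim (hH.1.2 u hu) hur
  · subst hs
    exact reach_elim (hH.2.1 u hu hur) hur

end BG

theorem stmt11 {V : Type} {G : BG V} (α : Bool) (r : V)
    (hG : G.IsRadial α r) (hsub : ¬ G.Reach (!α) (!α) r r)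
    (H : G.Sub) (hH : H.IsAlmostStrong α r)
    (hmax : ∀ K : G.Sub, K.IsAlmostStrong α r → K.le H) :
    ∀ x, x ∉ H.verts → (∃ u ∈ H.verts, u ≠ r ∧ G.Adj x u) →
      G.SublinearVtx α r x := by
  classical
  intro x hx hadj
  obtain ⟨u, hu, hur, huadj⟩ := hadj
  have hr : r ∈ H.verts := hH.1.1
  have hxr : x ≠ r := fun h => hx (h ▸ hr)
  refine ⟨hG x, fun hcon => ?_⟩
  -- a step est traversing an edge from x to u
  obtain ⟨est, hex, heu⟩ : ∃ est : G.Step, G.src est = x ∧ G.tgt est = u := by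
    obtain ⟨e, he⟩ := huadj
    rcases he with ⟨h1, h2⟩ | ⟨h1, h2⟩
    · exact ⟨(e, true), by simp [BG.src, h1], by simp [BG.tgt, h2]⟩
    · exact ⟨(e, false), by simp [BG.src, h2], by simp [BG.tgt, h1]⟩
  have hends : (G.fst est.1 = x ∧ G.snd est.1 = u) ∨ (G.fst est.1 = u ∧ G.snd est.1 = x) := by
    rcases BG.src_or est with ⟨h1, h2⟩ | ⟨h1, h2⟩
    · exact Or.inl ⟨h1.symm.trans hex, h2.symm.trans heu⟩
    · exact Or.inr ⟨h2.symm.trans heu, h1.symm.trans hex⟩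
  have heH : est.1 ∉ H.edges := by
    intro hmem
    rcases hends with ⟨h1, -⟩ | ⟨-, h2⟩
    · exact hx (h1 ▸ H.fst_mem est.1 hmem)
    · exact hx (h2 ▸ H.snd_mem est.1 hmem)
  -- a ditrail R from x to r starting with sign !(ssign est) and ending with !α
  have hRreach : G.Reach (!G.ssign est) (!α) x r := by
    rcases Bool.eq_or_eq_not (G.ssign est) α with h | h
    · rw [h]; exact hcon
    · rw [h, Bool.not_not]; exact hG x
  obtain ⟨R, a0, b0, hRd, -, hRh, hRs, hRl, hRt⟩ := BG.reach_elim hRreach hxr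
  -- the first index of R whose target lies in H
  have hfind : ∃ k : ℕ, ∃ st, R[k]? = some st ∧ G.tgt st ∈ H.verts := by
    refine ⟨R.length - 1, b0, ?_, ?_⟩
    · rw [← List.getLast?_eq_getElem?]; exact hRl
    · rw [hRd.2.2.2.1 b0 hRl]; exact hr
  obtain ⟨stj, hstj, hwH⟩ := Nat.find_spec hfind
  set j := Nat.find hfind with hj
  have hmin : ∀ k, k < j → ∀ st, R[k]? = some st → G.tgt st ∉ H.verts := by
    intro k hk st hst hmem
    exact Nat.find_min hfind hk ⟨st, hst, hmem⟩
  have hjlen : j < R.length := (List.getElem?_eq_some_iff.mp hstj).1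
  set R' := R.take (j + 1) with hR'def
  have hR'len : R'.length = j + 1 := by rw [hR'def, List.length_take]; omega
  have hgetR' : ∀ k, k ≤ j → R'[k]? = R[k]? := by
    intro k hk
    rw [hR'def, List.getElem?_take, if_pos (by omega)]
  have hstj' : R'[j]? = some stj := by rw [hgetR' j le_rfl]; exact hstj
  have hR0 : R[0]? = some a0 := by rw [← List.head?_eq_getElem?]; exact hRh
  have hsrcx : G.src a0 = x := hRd.2.2.1 a0 hRh
  -- all sources of steps of R up to index j avoid H
  have hsrcH : ∀ k st, k ≤ j → R[k]? = some st → G.src st ∉ H.verts := by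
    intro k st hk hst
    rcases k with _ | k'
    · rw [hR0] at hst
      rw [← Option.some.inj hst, hsrcx]
      exact hx
    · obtain ⟨stp, hstp⟩ : ∃ stp, R[k']? = some stp :=
        ⟨R[k']'(by omega), List.getElem?_eq_some_iff.mpr ⟨by omega, rfl⟩⟩
      have hrel := BG.chain'_rel hRd.2.1 hstp hst
      rw [← hrel.1]
      exact hmin k' (by omega) stp hstp
  have hedgeH : ∀ k st, k ≤ j → R[k]? = some st → st.1 ∉ H.edges := by
    intro k st hk hst hmem
    refine hsrcH k st hk hst ?_
    rcases BG.src_or st with ⟨h1, -⟩ | ⟨h1, -⟩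
    · rw [h1]; exact H.fst_mem st.1 hmem
    · rw [h1]; exact H.snd_mem st.1 hmem
  have heMid : ∀ k st, k < j → R[k]? = some st → st.1 ≠ est.1 := by
    intro k st hk hst heq
    have hs : G.src st ∉ H.verts := hsrcH k st (le_of_lt hk) hst
    have htg : G.tgt st ∉ H.verts := hmin k hk st hst
    have hu1 : u = G.src st ∨ u = G.tgt st := by
      rcases BG.src_or st with ⟨h1, h2⟩ | ⟨h1, h2⟩ <;> rcases hends with ⟨h3, h4⟩ | ⟨h3, h4⟩
      · right; rw [h2, heq, h4]
      · left; rw [h1, heq, h3]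
      · left; rw [h1, heq, h4]
      · right; rw [h2, heq, h3]
    rcases hu1 with h | h
    · exact hs (h ▸ hu)
    · exact htg (h ▸ hu)
  have hRsplit : R = R' ++ R.drop (j + 1) := by
    rw [hR'def, List.take_append_drop]
  have hR'last : R'.getLast? = some stj := by
    rw [hR'def, List.getLast?_take, if_neg (by omega)]
    simp only [Nat.add_sub_cancel]
    rw [hstj]
    rfl
  have htail : j + 1 = R.length → G.tsign stj = !α := by
    intro hlen
    have h1 : R.getLast? = some stj := by
      rw [List.getLast?_eq_getElem?]
      have h2 : R.length - 1 = j := by omega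
      rw [h2]; exact hstj
    rw [hRl] at h1
    rw [← Option.some.inj h1]
    exact hRt
  -- R' is a ditrail from x to tgt stj
  have hR'd : G.IsDitrail R' x (G.tgt stj) := by
    by_cases hlast : j + 1 < R.length
    · obtain ⟨st', hst'⟩ : ∃ st', R[j + 1]? = some st' :=
        ⟨R[j + 1]'(by omega), List.getElem?_eq_some_iff.mpr ⟨by omega, rfl⟩⟩
      have hhd : (R.drop (j + 1)).head? = some st' := by
        rw [List.head?_drop]; exact hst'
      have hd := BG.ditrail_split (hRsplit ▸ hRd) hhd
      have hrel := BG.chain'_rel hRd.2.1 hstj hst'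
      rw [← hrel.1] at hd
      exact hd.1
    · have hR'R : R' = R := by
        rw [hR'def]; exact List.take_of_length_le (by omega)
      have hlen : j + 1 = R.length := by omega
      have h1 : R.getLast? = some stj := by
        rw [List.getLast?_eq_getElem?]
        have h2 : R.length - 1 = j := by omega
        rw [h2]; exact hstj
      have hwr : G.tgt stj = r := hRd.2.2.2.1 stj h1
      rw [hR'R, hwr]
      exact hRd
  -- if the first H-visit is at r then it arrives with sign !α
  have hwt : G.tgt stj = r → G.tsign stj = !α := by
    intro hwr
    by_cases hlast : j + 1 < R.length
    · by_contra htne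
      have ht' : G.tsign stj = α := by
        rcases Bool.eq_or_eq_not (G.tsign stj) α with h | h
        · exact h
        · exact absurd h htne
      obtain ⟨st', hst'⟩ : ∃ st', R[j + 1]? = some st' :=
        ⟨R[j + 1]'(by omega), List.getElem?_eq_some_iff.mpr ⟨by omega, rfl⟩⟩
      have hhd : (R.drop (j + 1)).head? = some st' := by
        rw [List.head?_drop]; exact hst'
      have hd := BG.ditrail_split (hRsplit ▸ hRd) hhd
      have hrel := BG.chain'_rel hRd.2.1 hstj hst'
      have hdrop := hd.2
      rw [← hrel.1, hwr] at hdrop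
      have hdne : R.drop (j + 1) ≠ [] := by
        intro h0
        rw [h0] at hhd
        simp at hhd
      refine hsub ?_
      have hlastd : (R.drop (j + 1)).getLast? = some b0 := by
        rw [BG.getLast?_drop_of_ne_nil hdne]; exact hRl
      have hss' : G.ssign st' = !α := by
        have h5 : G.tsign stj = !G.ssign st' := hrel.2
        rw [ht'] at h5
        rw [← Bool.not_not (G.ssign st'), ← h5]
      exact BG.reachW_intro (R.drop (j + 1)) st' b0 hdrop
        (fun st _ => trivial) hhd hss' hlastd hRt
    · exact htail (by omega)
  -- a continuation from tgt stj to r inside H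
  obtain ⟨qw, hqwd, hqwe, hqwh, hqwl, hqw0⟩ :
      ∃ qw, G.IsDitrail qw (G.tgt stj) r ∧ (∀ st ∈ qw, st.1 ∈ H.edges) ∧
        (∀ st, qw.head? = some st → G.ssign st = !G.tsign stj) ∧
        (∀ st, qw.getLast? = some st → G.tsign st = !α) ∧
        (qw = [] → G.tsign stj = !α) := by
    by_cases hwr : G.tgt stj = r
    · exact ⟨[], ⟨by simp, List.isChain_nil, by simp, by simp, fun _ => hwr⟩,
        by simp, by simp, by simp, fun _ => hwt hwr⟩
    · obtain ⟨q, a, b, hd, he, hh, ha, hl, hb⟩ := BG.cont_strong hH hwH hwr (!G.tsign stj)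
      refine ⟨q, hd, he, ?_, ?_, ?_⟩
      · intro st hst
        rw [hh] at hst
        rw [← Option.some.inj hst]
        exact ha
      · intro st hst
        rw [hl] at hst
        rw [← Option.some.inj hst]
        exact hb
      · intro h0
        rw [h0] at hh
        simp at hh
  -- a continuation from u to r inside H
  obtain ⟨qu, au, bu, hqud, hque, hquh, hqua, hqul, hqub⟩ :=
    BG.cont_strong hH hu hur (!G.tsign est)
  -- the extended subgraph K
  have hKfst : ∀ f ∈ (H.edges ∪ {est.1}) ∪ {f | ∃ st ∈ R', st.1 = f},
      G.fst f ∈ (H.verts ∪ {x}) ∪ {v | ∃ st ∈ R', v = G.src st ∨ v = G.tgt st} := by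
    intro f hf
    rcases hf with (hf | hf) | hf
    · exact Or.inl (Or.inl (H.fst_mem f hf))
    · rcases hends with ⟨h1, -⟩ | ⟨h1, -⟩
      · rw [Set.mem_singleton_iff] at hf
        rw [hf, h1]
        exact Or.inl (Or.inr rfl)
      · rw [Set.mem_singleton_iff] at hf
        rw [hf, h1]
        exact Or.inl (Or.inl hu)
    · obtain ⟨st, hst, rfl⟩ := hf
      rcases BG.src_or st with ⟨h1, -⟩ | ⟨-, h2⟩
      · exact Or.inr ⟨st, hst, Or.inl h1.symm⟩
      · exact Or.inr ⟨st, hst, Or.inr h2.symm⟩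
  have hKsnd : ∀ f ∈ (H.edges ∪ {est.1}) ∪ {f | ∃ st ∈ R', st.1 = f},
      G.snd f ∈ (H.verts ∪ {x}) ∪ {v | ∃ st ∈ R', v = G.src st ∨ v = G.tgt st} := by
    intro f hf
    rcases hf with (hf | hf) | hf
    · exact Or.inl (Or.inl (H.snd_mem f hf))
    · rcases hends with ⟨-, h1⟩ | ⟨-, h1⟩
      · rw [Set.mem_singleton_iff] at hf
        rw [hf, h1]
        exact Or.inl (Or.inl hu)
      · rw [Set.mem_singleton_iff] at hf
        rw [hf, h1]
        exact Or.inl (Or.inr rfl)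
    · obtain ⟨st, hst, rfl⟩ := hf
      rcases BG.src_or st with ⟨-, h2⟩ | ⟨h1, -⟩
      · exact Or.inr ⟨st, hst, Or.inr h2.symm⟩
      · exact Or.inr ⟨st, hst, Or.inl h1.symm⟩
  set K : G.Sub :=
    { verts := (H.verts ∪ {x}) ∪ {v | ∃ st ∈ R', v = G.src st ∨ v = G.tgt st}
      edges := (H.edges ∪ {est.1}) ∪ {f | ∃ st ∈ R', st.1 = f}
      fst_mem := hKfst
      snd_mem := hKsnd } with hKdef
  have hHKe : H.edges ⊆ K.edges := fun f hf => Or.inl (Or.inl hf)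
  have hestK : est.1 ∈ K.edges := Or.inl (Or.inr rfl)
  have hR'K : ∀ st ∈ R', st.1 ∈ K.edges := fun st hst => Or.inr ⟨st, hst, rfl⟩
  -- the main claim: each source of a step of R' reaches r in K with either starting sign
  have main : ∀ (k : ℕ) (st : G.Step), R'[k]? = some st → ∀ s : Bool, G.ReachW K.edges s (!α) (G.src st) r := by
    intro k st hst s
    have hk : k < R'.length := (List.getElem?_eq_some_iff.mp hst).1
    have hkj : k ≤ j := by omega
    have hstR : R[k]? = some st := by rw [← hgetR' k hkj]; exact hst
    have hsplitk : R' = R'.take k ++ R'.drop k := by rw [List.take_append_drop]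
    have hheaddk : (R'.drop k).head? = some st := by
      rw [List.head?_drop]; exact hst
    obtain ⟨htake, hdrop⟩ := BG.ditrail_split (hsplitk ▸ hR'd) hheaddk
    have hdklast : (R'.drop k).getLast? = some stj := by
      rw [BG.getLast?_drop_of_ne_nil (by intro h0; rw [h0] at hheaddk; simp at hheaddk)]
      exact hR'last
    rcases Bool.eq_or_eq_not s (G.ssign st) with rfl | rfl
    · -- forward walk: (R'.drop k) ++ qw
      have hdisj : ∀ s1 ∈ R'.drop k, ∀ s2 ∈ qw, s1.1 ≠ s2.1 := by
        intro s1 h1 s2 h2 heq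
        obtain ⟨k1, hk1⟩ := List.mem_iff_getElem?.mp h1
        rw [List.getElem?_drop] at hk1
        have hb1 : k + k1 < R'.length := (List.getElem?_eq_some_iff.mp hk1).1
        refine hedgeH (k + k1) s1 (by omega) (by rw [← hgetR' (k + k1) (by omega)]; exact hk1) ?_
        rw [heq]
        exact hqwe s2 h2
      have hsg : ∀ a b, (R'.drop k).getLast? = some a → qw.head? = some b →
          G.tsign a = !G.ssign b := by
        intro a b ha hb
        rw [hdklast] at ha
        rw [← Option.some.inj ha, hqwh b hb, Bool.not_not]
      have hfd := hdrop.append hqwd hdisj hsg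
      have hheadF : ((R'.drop k) ++ qw).head? = some st := BG.head?_append' hheaddk
      rcases hqw : qw with _ | ⟨c, q'⟩
      · rw [hqw] at hfd
        rw [List.append_nil] at hfd
        exact BG.reachW_intro (R'.drop k) st stj hfd
          (fun s1 h1 => hR'K s1 (List.mem_of_mem_drop h1)) hheaddk rfl hdklast (hqw0 hqw)
      · obtain ⟨d, hd2⟩ := Option.isSome_iff_exists.mp
          (List.getLast?_isSome.mpr (show (c :: q') ≠ [] by simp))
        refine BG.reachW_intro ((R'.drop k) ++ (c :: q')) st d (hqw ▸ hfd) ?_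
          (hqw ▸ hheadF) rfl (BG.getLast?_append' hd2) (hqwl d (hqw ▸ hd2))
        intro s1 h1
        rcases List.mem_append.mp h1 with h1 | h1
        · exact hR'K s1 (List.mem_of_mem_drop h1)
        · exact hHKe (hqwe s1 (hqw ▸ h1))
    · -- backward walk: revW (R'.take k) ++ ([est] ++ qu)
      have hstep : G.IsDitrail [est] x u := by
        refine ⟨by simp, List.isChain_singleton _, ?_, ?_, by simp⟩
        · intro st' hst'
          rw [← Option.some.inj (by simpa using hst' : some est = some st')]
          exact hex
        · intro st' hst'
          rw [← Option.some.inj (by simpa using hst' : some est = some st')]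
          exact heu
      have hinner : G.IsDitrail ([est] ++ qu) x r := by
        refine hstep.append hqud ?_ ?_
        · intro s1 h1 s2 h2 heq
          have hs1 : s1 = est := by simpa using h1
          refine heH ?_
          rw [← hs1, heq]
          exact hque s2 h2
        · intro a b ha hb
          have ha' : est = a := by simpa using ha
          rw [hquh] at hb
          have hb' : au = b := Option.some.inj hb
          rw [← ha', ← hb', hqua, Bool.not_not]
      have hrev := htake.rev
      have houter : G.IsDitrail (G.revW (R'.take k) ++ ([est] ++ qu)) (G.src st) r := by
        refine hrev.append hinner ?_ ?_
        · intro s1 h1 s2 h2 heq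
          obtain ⟨s0, hs0, rfl⟩ := BG.mem_revW h1
          obtain ⟨k1, hk1⟩ := List.mem_iff_getElem?.mp hs0
          rw [List.getElem?_take] at hk1
          by_cases hk1k : k1 < k
          · rw [if_pos hk1k] at hk1
            have hk1R : R[k1]? = some s0 := by rw [← hgetR' k1 (by omega)]; exact hk1
            rcases List.mem_append.mp h2 with h2 | h2
            · have hs2 : s2 = est := by simpa using h2
              refine heMid k1 s0 (by omega) hk1R ?_
              rw [show s0.1 = (G.rv s0).1 from rfl, heq, hs2]
            · refine hedgeH k1 s0 (by omega) hk1R ?_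
              have heq' : s0.1 = s2.1 := heq
              rw [heq']
              exact hque s2 h2
          · rw [if_neg hk1k] at hk1
            simp at hk1
        · intro a b ha hb
          have hb' : est = b := by simpa using hb
          rw [BG.revW_getLast?] at ha
          obtain ⟨a', ha', rfl⟩ := Option.map_eq_some_iff.mp ha
          have hk0 : k ≠ 0 := by
            rintro rfl
            rw [List.take_zero] at ha'
            simp at ha'
          rw [List.head?_take, if_neg hk0, hR'def, List.head?_take,
            if_neg (by omega : ¬(j + 1 = 0)), hRh] at ha'
          have ha0' : a' = a0 := (Option.some.inj ha').symm
          rw [BG.tsign_rv, ha0', hRs, hb']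
      -- package the backward walk as a ReachW
      have hmemW : ∀ s1 ∈ G.revW (R'.take k) ++ ([est] ++ qu), s1.1 ∈ K.edges := by
        intro s1 h1
        rcases List.mem_append.mp h1 with h1 | h1
        · obtain ⟨s0, hs0, rfl⟩ := BG.mem_revW h1
          have : s0.1 ∈ K.edges := hR'K s0 (List.mem_of_mem_take hs0)
          exact this
        · rcases List.mem_append.mp h1 with h1 | h1
          · have hs1 : s1 = est := by simpa using h1
            rw [hs1]
            exact hestK
          · exact hHKe (hque s1 h1)
      have hlastW : (G.revW (R'.take k) ++ ([est] ++ qu)).getLast? = some bu :=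
        BG.getLast?_append' (BG.getLast?_append' hqul)
      rcases k with _ | k'
      · -- k = 0 : the walk starts with est
        have hsta : st = a0 := by
          rw [hgetR' 0 (Nat.zero_le _), hR0] at hst
          exact (Option.some.inj hst).symm
        have hheadW : (G.revW (R'.take 0) ++ ([est] ++ qu)).head? = some est := by
          rw [List.take_zero]
          rfl
        refine BG.reachW_intro _ est bu houter hmemW hheadW ?_ hlastW hqub
        rw [hsta, hRs, Bool.not_not]
      · -- k = k' + 1 : the walk starts with the reversal of step k' of R'
        obtain ⟨stp, hkp⟩ : ∃ stp, R'[k']? = some stp :=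
          ⟨R'[k']'(by omega), List.getElem?_eq_some_iff.mpr ⟨by omega, rfl⟩⟩
        have hrel := BG.chain'_rel hR'd.2.1 hkp hst
        have hlastT : (R'.take (k' + 1)).getLast? = some stp := by
          rw [List.getLast?_take, if_neg (by omega)]
          simp only [Nat.add_sub_cancel]
          rw [hkp]
          rfl
        have hheadW : (G.revW (R'.take (k' + 1)) ++ ([est] ++ qu)).head? = some (G.rv stp) := by
          refine BG.head?_append' ?_
          rw [BG.revW_head?, hlastT]
          rfl
        refine BG.reachW_intro _ (G.rv stp) bu houter hmemW hheadW ?_ hlastW hqub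
        rw [BG.ssign_rv, hrel.2]
  -- K is almost strong, contradicting maximality of H
  have hvert : ∀ v ∈ K.verts, v ∉ H.verts →
      ∃ k : ℕ, ∃ stv, R'[k]? = some stv ∧ v = G.src stv := by
    intro v hv hvH
    rcases hv with (hv | hv) | hv
    · exact absurd hv hvH
    · rw [Set.mem_singleton_iff] at hv
      subst hv
      exact ⟨0, a0, by rw [hgetR' 0 (Nat.zero_le _)]; exact hR0, hsrcx.symm⟩
    · obtain ⟨stv, hstm, hv'⟩ := hv
      obtain ⟨k, hk⟩ := List.mem_iff_getElem?.mp hstm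
      have hkb : k < R'.length := (List.getElem?_eq_some_iff.mp hk).1
      rcases hv' with rfl | rfl
      · exact ⟨k, stv, hk, rfl⟩
      · by_cases hkj' : k = j
        · subst hkj'
          have hsv : stj = stv := Option.some.inj (hstj'.symm.trans hk)
          exact absurd (hsv ▸ hwH) hvH
        · obtain ⟨st2, hst2⟩ : ∃ st2, R'[k + 1]? = some st2 :=
            ⟨R'[k + 1]'(by omega), List.getElem?_eq_some_iff.mpr ⟨by omega, rfl⟩⟩
          have hrel := BG.chain'_rel hR'd.2.1 hk hst2
          exact ⟨k + 1, st2, hst2, hrel.1⟩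
  have hKas : K.IsAlmostStrong α r := by
    refine ⟨⟨Or.inl (Or.inl hr), ?_⟩, ?_, ?_⟩
    · intro v hv
      by_cases hvH : v ∈ H.verts
      · exact BG.reachW_mono hHKe (hH.1.2 v hvH)
      · obtain ⟨k, stv, hk, rfl⟩ := hvert v hv hvH
        exact main k stv hk α
    · intro v hv hvr
      by_cases hvH : v ∈ H.verts
      · exact BG.reachW_mono hHKe (hH.2.1 v hvH hvr)
      · obtain ⟨k, stv, hk, rfl⟩ := hvert v hv hvH
        exact main k stv hk (!α)
    · intro hcon'
      exact hsub (BG.reachW_mono (fun f _ => trivial) hcon')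
  exact hx ((hmax K hKas).1 (Or.inl (Or.inr rfl)))
end
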